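/- Let F be a free group on a set E, let G = F/γ₃(F) be its 2-nilpotent quotient, and let A = G^{ab} ≅ F^{ab} be the abelianization with quotient map p: G → A. Then: (i) the kernel of p equals γ₂(F)/γ₃(F) and is contained in the center of G; (ii) there is an isomorphism of abelian groups w: ⋀²A → ker p satisfying w(p(x) ∧ p(y)) = x⁻¹y⁻¹xy for all x, y ∈ G. In particular there is a central extension ⋀²A ↣ G ↠ A, and the commutator map induces a natural isomorphism ⋀²(F^{ab}) ≅ γ₂(F)/γ₃(F). -/

import Mathlib

/-!
In a group whose commutator subgroup is central, the commutator map is biadditive and alternating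
on the abelianization, so it induces a surjection `Λ²(G^ab) → [G, G]` sending `p x ∧ p y` to the
commutator of `x` and `y`. For `G = F/γ₃(F)` the abelianization is free abelian, so well-ordering a
basis yields a bilinear `β` with `β a b - β b a = a ∧ b`. The extension of `G^ab` by `Λ²(G^ab)` with
cocycle `β` has class two, hence receives a map from `G` over the abelianization, and there the
commutator of two elements has second coordinate exactly `p x ∧ p y`; reading off that coordinate
inverts the surjection.
-/

noncomputable section

/-- the subgroup of relations of the exterior square of an abelian group. -/
def Lambda2Rels (A : Type) [AddCommGroup A] : AddSubgroup (TensorProduct ℤ A A) :=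
  AddSubgroup.closure {x | ∃ a : A, x = a ⊗ₜ[ℤ] a}

/-- the exterior square `Λ²(A) = (A ⊗ A)/(a ⊗ a)` of an abelian group `A`. -/
def Lambda2 (A : Type) [AddCommGroup A] : Type := TensorProduct ℤ A A ⧸ Lambda2Rels A

instance (A : Type) [AddCommGroup A] : AddCommGroup (Lambda2 A) :=
  QuotientAddGroup.Quotient.addCommGroup _

/-- the class of `a ⊗ b` in the exterior square, i.e. `a ∧ b`. -/
def Lambda2.mk {A : Type} [AddCommGroup A] (a b : A) : Lambda2 A :=
  QuotientAddGroup.mk (a ⊗ₜ[ℤ] b)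

open scoped commutatorElement

namespace Lambda2

variable {A B C : Type} [AddCommGroup A] [AddCommGroup B] [AddCommGroup C]

lemma mk_add_left (a a' b : A) : mk (a + a') b = mk a b + mk a' b := by
  rw [mk, TensorProduct.add_tmul, QuotientAddGroup.mk_add]; rfl

lemma mk_add_right (a b b' : A) : mk a (b + b') = mk a b + mk a b' := by
  rw [mk, TensorProduct.tmul_add, QuotientAddGroup.mk_add]; rfl

lemma mk_zsmul_left (n : ℤ) (a b : A) : mk (n • a) b = n • mk a b := by
  rw [mk, ← TensorProduct.smul_tmul', QuotientAddGroup.mk_zsmul]; rfl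

lemma mk_zsmul_right (n : ℤ) (a b : A) : mk a (n • b) = n • mk a b := by
  rw [mk, TensorProduct.tmul_smul, QuotientAddGroup.mk_zsmul]; rfl

lemma mk_self (a : A) : mk a a = 0 :=
  (QuotientAddGroup.eq_zero_iff _).mpr (AddSubgroup.subset_closure ⟨a, rfl⟩)

lemma mk_swap (a b : A) : mk b a = -mk a b := by
  have h := mk_self (a + b)
  rw [mk_add_left, mk_add_right, mk_add_right, mk_self, mk_self, zero_add, add_zero] at h
  exact eq_neg_of_add_eq_zero_right h

def mkₗ : A →ₗ[ℤ] A →ₗ[ℤ] Lambda2 A :=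
  LinearMap.mk₂ ℤ mk mk_add_left mk_zsmul_left mk_add_right mk_zsmul_right

@[simp] lemma mkₗ_apply (a b : A) : mkₗ a b = mk a b := rfl

def lift (φ : A →ₗ[ℤ] A →ₗ[ℤ] C) (hφ : ∀ a, φ a a = 0) : Lambda2 A →+ C :=
  QuotientAddGroup.lift _ (TensorProduct.lift φ).toAddMonoidHom <|
    (AddSubgroup.closure_le _).mpr <| by rintro _ ⟨a, rfl⟩; simp [hφ]

@[ext] lemma hom_ext {f g : Lambda2 A →+ C} (h : ∀ a b, f (mk a b) = g (mk a b)) : f = g :=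
  QuotientAddGroup.addMonoidHom_ext _ <| congrArg LinearMap.toAddMonoidHom <|
    TensorProduct.ext' (g := (f.comp (QuotientAddGroup.mk' _)).toIntLinearMap)
      (h := (g.comp (QuotientAddGroup.mk' _)).toIntLinearMap) h

def map (f : A →+ B) : Lambda2 A →+ Lambda2 B :=
  lift (mkₗ.compl₁₂ f.toIntLinearMap f.toIntLinearMap) fun a => mk_self (f a)

@[simp] lemma map_mk (f : A →+ B) (a b : A) : map f (mk a b) = mk (f a) (f b) := rfl

def congr (e : A ≃+ B) : Lambda2 A ≃+ Lambda2 B :=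
  AddMonoidHom.toAddEquiv (map e) (map e.symm) (by ext; simp) (by ext; simp)

theorem exists_sub_flip_eq_mk [Module.Free ℤ A] :
    ∃ β : A →ₗ[ℤ] A →ₗ[ℤ] Lambda2 A, ∀ a c, β a c - β c a = mk a c := by
  let b := Module.Free.chooseBasis ℤ A
  let _ : LinearOrder (Module.Free.ChooseBasisIndex ℤ A) := IsWellOrder.linearOrder WellOrderingRel
  let β : A →ₗ[ℤ] A →ₗ[ℤ] Lambda2 A :=
    b.constr ℤ fun i => b.constr ℤ fun j => if j < i then mk (b i) (b j) else 0
  suffices h : β - β.flip = mkₗ from ⟨β, fun a c => LinearMap.congr_fun₂ h a c⟩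
  refine b.ext fun i => b.ext fun j => ?_
  simp only [β, LinearMap.sub_apply, LinearMap.flip_apply, Module.Basis.constr_basis, mkₗ_apply]
  rcases lt_trichotomy i j with h | rfl | h
  · rw [if_neg h.asymm, if_pos h, zero_sub, mk_swap, neg_neg]
  · rw [if_neg (lt_irrefl i), sub_zero, mk_self]
  · rw [if_pos h, if_neg h.asymm, sub_zero]

end Lambda2

namespace Subgroup

variable {G H : Type*} [Group G] [Group H]

lemma lowerCentralSeries_two_eq_bot_iff :
    (⊤ : Subgroup G).lowerCentralSeries 2 = ⊥ ↔ _root_.commutator G ≤ center G := by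
  rw [← centralizer_univ, ← coe_top]
  exact commutator_eq_bot_iff_le_centralizer

lemma map_top_lowerCentralSeries_of_surjective {f : G →* H}
    (hf : Function.Surjective f) (n : ℕ) :
    ((⊤ : Subgroup G).lowerCentralSeries n).map f = (⊤ : Subgroup H).lowerCentralSeries n := by
  rw [map_lowerCentralSeries, map_top_of_surjective f hf]

lemma lowerCentralSeries_le_ker (f : G →* H) {n : ℕ}
    (hH : (⊤ : Subgroup H).lowerCentralSeries n = ⊥) :
    (⊤ : Subgroup G).lowerCentralSeries n ≤ f.ker := by
  rw [← map_eq_bot_iff, map_lowerCentralSeries, eq_bot_iff, ← hH]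
  exact lowerCentralSeries_mono n le_top

end Subgroup

lemma QuotientGroup.lowerCentralSeries_quotient_eq_bot {G : Type*} [Group G] (n : ℕ) :
    (⊤ : Subgroup (G ⧸ (⊤ : Subgroup G).lowerCentralSeries n)).lowerCentralSeries n = ⊥ := by
  rw [← Subgroup.map_top_lowerCentralSeries_of_surjective (QuotientGroup.mk'_surjective _),
    Subgroup.map_eq_bot_iff, QuotientGroup.ker_mk']

def QuotientGroup.subgroupOfEquivMap {G : Type*} [Group G] (N H : Subgroup G) [N.Normal] :
    H ⧸ N.subgroupOf H ≃* H.map (QuotientGroup.mk' N) :=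
  (QuotientGroup.quotientMulEquivOfEq
      (by rw [Subgroup.ker_subgroupMap, QuotientGroup.ker_mk'])).trans
    (QuotientGroup.quotientKerEquivOfSurjective _ ((QuotientGroup.mk' N).subgroupMap_surjective H))

def Abelianization.quotientEquiv {G : Type} [Group G] (N : Subgroup G) [N.Normal]
    (hN : N ≤ commutator G) : Abelianization G ≃* Abelianization (G ⧸ N) :=
  MonoidHom.toMulEquiv (Abelianization.map (QuotientGroup.mk' N))
    (Abelianization.lift
      (QuotientGroup.lift N Abelianization.of (hN.trans (Abelianization.ker_of G).ge)))
    (by ext; rfl) (by ext; rfl)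

section ClassTwo

variable {G : Type} [Group G] (hc : commutator G ≤ Subgroup.center G)
include hc

lemma commute_commutatorElement_of_le_center (g x y : G) : Commute g ⁅x, y⁆ :=
  Subgroup.mem_center_iff.mp
    (hc (Subgroup.commutator_mem_commutator (Subgroup.mem_top x) (Subgroup.mem_top y))) g

lemma commutatorElement_mul_left_of_le_center (x x' y : G) :
    ⁅x * x', y⁆ = ⁅x, y⁆ * ⁅x', y⁆ := by
  rw [commutatorElement_mul_left_eq_conj_mul, (commute_commutatorElement_of_le_center hc x x' y).eq,
    mul_inv_cancel_right]
  exact (commute_commutatorElement_of_le_center hc _ x y).eq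

lemma commutatorElement_mul_right_of_le_center (x y y' : G) :
    ⁅x, y * y'⁆ = ⁅x, y⁆ * ⁅x, y'⁆ := by
  rw [commutatorElement_mul_right_eq_mul_conj, mul_assoc _ y,
    (commute_commutatorElement_of_le_center hc y x y').eq, ← mul_assoc, mul_inv_cancel_right]

lemma commutatorElement_inv_inv_of_le_center (x y : G) : ⁅x⁻¹, y⁻¹⁆ = ⁅x, y⁆ := by
  rw [commutatorElement_inv_left, (commute_commutatorElement_of_le_center hc _ _ _).eq,
    inv_mul_cancel_right, commutatorElement_inv_left,
    (commute_commutatorElement_of_le_center hc _ _ _).eq, inv_mul_cancel_right]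

lemma isMulCommutative_commutator_of_le_center : IsMulCommutative (commutator G) :=
  ⟨⟨fun a b => Subtype.ext ((hc b.2).comm a).symm⟩⟩

end ClassTwo

/-- The central extension of `A` by `C` with the bilinear 2-cocycle `β`. -/
@[ext]
structure TwistedProd {A C : Type*} [AddCommGroup A] [AddCommGroup C] (β : A →ₗ[ℤ] A →ₗ[ℤ] C) where
  fst : A
  snd : C

namespace TwistedProd

variable {A C : Type*} [AddCommGroup A] [AddCommGroup C] {β : A →ₗ[ℤ] A →ₗ[ℤ] C}

instance : Mul (TwistedProd β) := ⟨fun x y => ⟨x.fst + y.fst, x.snd + y.snd + β x.fst y.fst⟩⟩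
instance : One (TwistedProd β) := ⟨⟨0, 0⟩⟩
instance : Inv (TwistedProd β) := ⟨fun x => ⟨-x.fst, -x.snd + β x.fst x.fst⟩⟩

@[simp] lemma fst_mul (x y : TwistedProd β) : (x * y).fst = x.fst + y.fst := rfl
@[simp] lemma snd_mul (x y : TwistedProd β) : (x * y).snd = x.snd + y.snd + β x.fst y.fst := rfl
@[simp] lemma fst_one : (1 : TwistedProd β).fst = 0 := rfl
@[simp] lemma snd_one : (1 : TwistedProd β).snd = 0 := rfl
@[simp] lemma fst_inv (x : TwistedProd β) : x⁻¹.fst = -x.fst := rfl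
@[simp] lemma snd_inv (x : TwistedProd β) : x⁻¹.snd = -x.snd + β x.fst x.fst := rfl

instance : Group (TwistedProd β) where
  mul_assoc x y z := by ext <;> simp <;> abel
  one_mul x := by ext <;> simp
  mul_one x := by ext <;> simp
  inv_mul_cancel x := by ext <;> simp

variable (β) in
def fstHom : TwistedProd β →* Multiplicative A where
  toFun x := Multiplicative.ofAdd x.fst
  map_one' := rfl
  map_mul' _ _ := rfl

lemma commutatorElement_eq (x y : TwistedProd β) :
    ⁅x, y⁆ = ⟨0, β x.fst y.fst - β y.fst x.fst⟩ := by
  ext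
  · simp [commutatorElement_def]
  · simp [commutatorElement_def]
    abel

lemma commutator_le_center : commutator (TwistedProd β) ≤ Subgroup.center (TwistedProd β) := by
  rw [commutator_def, Subgroup.commutator_le]
  intro x _ y _
  rw [Subgroup.mem_center_iff, commutatorElement_eq]
  intro g
  ext <;> simp [add_comm]

lemma lowerCentralSeries_two_eq_bot :
    (⊤ : Subgroup (TwistedProd β)).lowerCentralSeries 2 = ⊥ :=
  Subgroup.lowerCentralSeries_two_eq_bot_iff.mpr commutator_le_center

end TwistedProd

lemma Abelianization.exists_ofMul_of {G : Type} [Group G] (a : Additive (Abelianization G)) :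
    ∃ x : G, Additive.ofMul (Abelianization.of x) = a :=
  QuotientGroup.mk_surjective a

lemma Lambda2.hom_ext_abelianization {G C : Type} [Group G] [AddCommGroup C]
    {f g : Lambda2 (Additive (Abelianization G)) →+ C}
    (h : ∀ x y : G,
      f (mk (.ofMul (.of x)) (.ofMul (.of y))) = g (mk (.ofMul (.of x)) (.ofMul (.of y)))) :
    f = g := by
  ext a b
  obtain ⟨x, rfl⟩ := Abelianization.exists_ofMul_of a
  obtain ⟨y, rfl⟩ := Abelianization.exists_ofMul_of b
  exact h x y

section Pairing

open scoped IsMulCommutative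

variable {G : Type} [Group G] (hc : commutator G ≤ Subgroup.center G)
  [IsMulCommutative (commutator G)]

def commutatorBihom : G →* G →* commutator G :=
  MonoidHom.mk'
    (fun x => MonoidHom.mk'
      (fun y => ⟨⁅x, y⁆,
        Subgroup.commutator_mem_commutator (Subgroup.mem_top x) (Subgroup.mem_top y)⟩)
      fun y y' => Subtype.ext (commutatorElement_mul_right_of_le_center hc x y y'))
    fun x x' => MonoidHom.ext fun y =>
      Subtype.ext (commutatorElement_mul_left_of_le_center hc x x' y)

def commutatorPairing : Lambda2 (Additive (Abelianization G)) →+ Additive (commutator G) :=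
  let B := Abelianization.lift (Abelianization.lift (commutatorBihom hc).flip).flip
  Lambda2.lift
    (LinearMap.mk₂ ℤ (fun a b => Additive.ofMul (B a.toMul b.toMul))
      (by simp) (by simp) (by simp) (by simp))
    fun a => by
      obtain ⟨x, rfl⟩ := Abelianization.exists_ofMul_of a
      exact congrArg Additive.ofMul (Subtype.ext (commutatorElement_self x))

lemma coe_commutatorPairing_mk (x y : G) :
    ((commutatorPairing hc (Lambda2.mk (.ofMul (.of x)) (.ofMul (.of y)))).toMul : G) = ⁅x, y⁆ :=
  rfl

lemma commutatorPairing_surjective : Function.Surjective (commutatorPairing hc) := by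
  let P := AddMonoidHom.toMultiplicativeLeft (commutatorPairing hc)
  have h : commutator G ≤ P.range.map (commutator G).subtype := by
    conv_lhs => rw [commutator_eq_closure]
    rw [Subgroup.closure_le]
    rintro _ ⟨x, y, rfl⟩
    exact ⟨_, ⟨.ofAdd (Lambda2.mk (.ofMul (.of x)) (.ofMul (.of y))), rfl⟩, rfl⟩
  intro k
  obtain ⟨_, ⟨s, rfl⟩, hs⟩ := h k.toMul.2
  exact ⟨s.toAdd, congrArg Additive.ofMul (Subtype.ext hs)⟩

lemma commutatorPairing_injective
    {β : Additive (Abelianization G) →ₗ[ℤ] Additive (Abelianization G) →ₗ[ℤ]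
      Lambda2 (Additive (Abelianization G))}
    (hβ : ∀ a c, β a c - β c a = Lambda2.mk a c) (f : G →* TwistedProd β)
    (hf : ∀ x, (f x).fst = .ofMul (.of x)) :
    Function.Injective (commutatorPairing hc) := by
  have hfst : ∀ k : commutator G, (f k).fst = 0 := fun k => by
    rw [hf, MonoidHom.mem_ker.mp ((Abelianization.ker_of G).ge k.2)]; rfl
  let v : Additive (commutator G) →+ Lambda2 (Additive (Abelianization G)) :=
    AddMonoidHom.mk' (fun k => (f k.toMul).snd) fun k k' => by simp [hfst]
  have hv : v.comp (commutatorPairing hc) = AddMonoidHom.id _ :=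
    Lambda2.hom_ext_abelianization fun x y => by
      simp only [AddMonoidHom.comp_apply, AddMonoidHom.id_apply, AddMonoidHom.mk'_apply, v,
        coe_commutatorPairing_mk, map_commutatorElement, TwistedProd.commutatorElement_eq, hf, hβ]
  exact Function.LeftInverse.injective (g := v) (DFunLike.congr_fun hv)

end Pairing

lemma FreeGroup.exists_lift_twistedProd {E : Type} {C : Type*} [AddCommGroup C]
    (β : Additive (Abelianization (FreeGroup E ⧸ (⊤ : Subgroup (FreeGroup E)).lowerCentralSeries 2))
      →ₗ[ℤ]
        Additive (Abelianization (FreeGroup E ⧸ (⊤ : Subgroup (FreeGroup E)).lowerCentralSeries 2))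
      →ₗ[ℤ] C) :
    ∃ f : FreeGroup E ⧸ (⊤ : Subgroup (FreeGroup E)).lowerCentralSeries 2 →* TwistedProd β,
      ∀ x, (f x).fst = .ofMul (.of x) := by
  let f₀ : FreeGroup E →* TwistedProd β :=
    FreeGroup.lift fun e => ⟨.ofMul (.of (FreeGroup.of e)), 0⟩
  let f := QuotientGroup.lift _ f₀
    (Subgroup.lowerCentralSeries_le_ker f₀ TwistedProd.lowerCentralSeries_two_eq_bot)
  have h : (TwistedProd.fstHom β).comp f = Abelianization.of := by
    ext e
    simp only [f, f₀, MonoidHom.comp_apply, QuotientGroup.mk'_apply, QuotientGroup.lift_mk,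
      FreeGroup.lift_apply_of]
    rfl
  exact ⟨f, fun x => DFunLike.congr_fun h x⟩

/-- Let `F` be a free group on a set `E`, `G = F/γ₃(F)` its 2-nilpotent quotient,
`A = G^{ab} (≅ F^{ab})` its abelianization and `p : G → A` the quotient map.  Then
(i) `ker p = γ₂(F)/γ₃(F)` and `ker p` is contained in the center of `G`, and
(ii) there is an isomorphism of abelian groups `w : Λ²A ≅ ker p` with
`w (p x ∧ p y) = x⁻¹y⁻¹xy` for all `x y : G`; in particular there is a central
extension `Λ²A ↣ G ↠ A` and the commutator map induces an isomorphism
`Λ²(F^{ab}) ≅ γ₂(F)/γ₃(F)`. -/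
theorem free_nil2_central_extension (E : Type) :
    let F := FreeGroup E
    let G := F ⧸ (⊤ : Subgroup F).lowerCentralSeries 2
    let p : G →* Abelianization G := Abelianization.of
    -- (i)
    (MonoidHom.ker p =
        Subgroup.map (QuotientGroup.mk' ((⊤ : Subgroup F).lowerCentralSeries 2)) ((⊤ : Subgroup F).lowerCentralSeries 1)) ∧
    (MonoidHom.ker p ≤ Subgroup.center G) ∧
    -- (ii)
    (∃ w : Lambda2 (Additive (Abelianization G)) ≃+ Additive (MonoidHom.ker p),
      ∀ x y : G,
        ((Additive.toMul
            (w (Lambda2.mk (Additive.ofMul (p x)) (Additive.ofMul (p y)))) : MonoidHom.ker p) : G)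
          = x⁻¹ * y⁻¹ * x * y) ∧
    -- in particular, the commutator map induces `Λ²(F^{ab}) ≅ γ₂(F)/γ₃(F)`
    Nonempty (Lambda2 (Additive (Abelianization F)) ≃+
      Additive (((⊤ : Subgroup F).lowerCentralSeries 1) ⧸
        (((⊤ : Subgroup F).lowerCentralSeries 2).subgroupOf ((⊤ : Subgroup F).lowerCentralSeries 1)))) := by
  intro F G p
  have hker : p.ker = commutator G := Abelianization.ker_of G
  have hc : commutator G ≤ Subgroup.center G := Subgroup.lowerCentralSeries_two_eq_bot_iff.mp
    (QuotientGroup.lowerCentralSeries_quotient_eq_bot 2)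
  have hi : p.ker = ((⊤ : Subgroup F).lowerCentralSeries 1).map (QuotientGroup.mk' _) :=
    hker.trans
      (Subgroup.map_top_lowerCentralSeries_of_surjective (QuotientGroup.mk'_surjective _) 1).symm
  let eAb : Abelianization F ≃* Abelianization G := Abelianization.quotientEquiv _
    (Subgroup.lowerCentralSeries_antitone ⊤ (by norm_num : 1 ≤ 2))
  have : Module.Free ℤ (Additive (Abelianization G)) :=
    .of_basis ((FreeAbelianGroup.basis E).map (MulEquiv.toAdditive eAb).toIntLinearEquiv)
  have : IsMulCommutative (commutator G) := isMulCommutative_commutator_of_le_center hc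
  obtain ⟨β, hβ⟩ := Lambda2.exists_sub_flip_eq_mk (A := Additive (Abelianization G))
  obtain ⟨f, hf⟩ := FreeGroup.exists_lift_twistedProd β
  let w := (AddEquiv.ofBijective (commutatorPairing hc)
    ⟨commutatorPairing_injective hc hβ f hf, commutatorPairing_surjective hc⟩).trans
    (MulEquiv.toAdditive (MulEquiv.subgroupCongr hker.symm))
  refine ⟨hi, hker ▸ hc, ⟨w, fun x y => ?_⟩, ⟨(Lambda2.congr (MulEquiv.toAdditive eAb)).trans <|
    w.trans (MulEquiv.toAdditive ((MulEquiv.subgroupCongr hi).trans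
      (QuotientGroup.subgroupOfEquivMap _ _).symm))⟩⟩
  calc _ = ⁅x, y⁆ := coe_commutatorPairing_mk hc x y
    _ = ⁅x⁻¹, y⁻¹⁆ := (commutatorElement_inv_inv_of_le_center hc x y).symm
    _ = x⁻¹ * y⁻¹ * x * y := by rw [commutatorElement_def, inv_inv, inv_inv]

end
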